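/- arXiv:2508.07148 — 3 statements merged into one kernel-verified Lean document; each statement's English description precedes it below -/
import Mathlib

section
/- The inverse discrete frequency Zak transform of a pulsone-modulated signal satisfies: if x[n] = Σ_{k₀=0}^{M-1} Σ_{l₀=0}^{N-1} X[k₀,l₀] p_{(k₀,l₀)}[n], then the DFT coefficient s[i] = (1/√(MN)) Σ_{n=0}^{MN-1} e^{-2πi i n/(MN)} x[n] equals (1/√M) Σ_{k₀=0}^{M-1} X[k₀, i mod N] e^{-2πi i k₀/(MN)} for every 0 ≤ i ≤ MN-1. -/
open Complex

/-- The discrete-time pulsone, in closed form on ℤ. -/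
noncomputable def pulsone (M N k₀ l₀ : ℕ) (n : ℤ) : ℂ :=
  if n % (M : ℤ) = (k₀ : ℤ) then
    (1 / (Real.sqrt N : ℂ)) *
      Complex.exp (2 * Real.pi * Complex.I * (((n - (k₀ : ℤ)) / (M : ℤ) : ℤ) : ℂ) * l₀ / N)
  else 0

/-!
The pulsone `p_{(k₀,l₀)}` lives on the residue class `k₀ mod M`, so on the class `k` the signal
`x[k + dM]` is the `N`-point inverse DFT of `X[k, ·]`, evaluated at `d`. Writing `n = k + dM` in
the `MN`-point DFT splits its kernel as `e^{-2πi ik/(MN)} · e^{-2πi id/N}`: the first factor is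
the twiddle of the result, and the sum over `d` is an `N`-point forward DFT, which by Fourier
inversion returns `√N · X[k, i mod N]`.
-/

open Finset
open scoped Real

theorem sum_range_mul_eq_sum_sum_add_mul {A : Type*} [AddCommMonoid A] (f : ℕ → A) (m n : ℕ) :
    ∑ i ∈ range (m * n), f i = ∑ k ∈ range m, ∑ d ∈ range n, f (k + d * m) := by
  induction n with
  | zero => simp
  | succ n ih =>
    rw [Nat.mul_succ, sum_range_add, ih, ← sum_add_distrib]
    refine sum_congr rfl fun k _ => ?_
    rw [sum_range_succ, Nat.add_comm k, Nat.mul_comm n]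

theorem sum_range_exp_two_pi_I_int_mul_div {N : ℕ} (hN : N ≠ 0) (j : ℤ) :
    ∑ d ∈ range N, exp (2 * π * I * j * d / N) = if (N : ℤ) ∣ j then (N : ℂ) else 0 := by
  have hζ := isPrimitiveRoot_exp N hN
  have hterm : ∀ d : ℕ, exp (2 * π * I * j * d / N) = (exp (2 * π * I / N) ^ j) ^ d := by
    intro d
    rw [← exp_int_mul, ← exp_nat_mul]
    ring_nf
  simp only [hterm]
  split_ifs with hj
  · simp [(hζ.zpow_eq_one_iff_dvd j).mpr hj]
  · have hw : exp (2 * π * I / N) ^ j ≠ 1 := mt (hζ.zpow_eq_one_iff_dvd j).mp hj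
    have hwN : (exp (2 * π * I / N) ^ j) ^ N = 1 := by
      rw [← zpow_natCast, ← zpow_mul, mul_comm j, zpow_mul, zpow_natCast, hζ.pow_eq_one, one_zpow]
    rw [geom_sum_eq hw, hwN, sub_self, zero_div]

theorem sum_range_ite_dvd_sub {A : Type*} [AddCommMonoid A] {N : ℕ} (hN : 0 < N) (c : ℕ → A)
    (i : ℕ) :
    ∑ l ∈ range N, (if (N : ℤ) ∣ (l : ℤ) - i then c l else 0) = c (i % N) := by
  have hdvd : ∀ l ∈ range N, ((N : ℤ) ∣ (l : ℤ) - i ↔ i % N = l) := fun l hl => by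
    rw [← Nat.modEq_iff_dvd, Nat.ModEq, Nat.mod_eq_of_lt (mem_range.mp hl)]
  rw [sum_congr rfl fun l hl => if_congr (hdvd l hl) rfl rfl, sum_ite_eq]
  simp [Nat.mod_lt i hN]

/-- `N`-point discrete Fourier inversion. -/
theorem sum_range_exp_neg_mul_sum_exp {N : ℕ} (hN : 0 < N) (c : ℕ → ℂ) (i : ℕ) :
    ∑ d ∈ range N, exp (-(2 * π * I * i * d / N)) * ∑ l ∈ range N, c l * exp (2 * π * I * d * l / N)
      = N * c (i % N) := by
  have hphase : ∀ d l : ℕ, exp (-(2 * π * I * i * d / N)) * exp (2 * π * I * d * l / N)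
      = exp (2 * π * I * ((l - i : ℤ) : ℂ) * d / N) := fun d l => by
    rw [← exp_add]; push_cast; ring_nf
  calc _ = ∑ l ∈ range N, c l * ∑ d ∈ range N, exp (2 * π * I * ((l - i : ℤ) : ℂ) * d / N) := by
        simp only [mul_sum, ← hphase]
        rw [sum_comm]
        exact sum_congr rfl fun l _ => sum_congr rfl fun d _ => by ring
    _ = ∑ l ∈ range N, (if (N : ℤ) ∣ (l : ℤ) - i then N * c l else 0) := by
        simp only [sum_range_exp_two_pi_I_int_mul_div hN.ne', mul_ite, mul_zero]
        exact sum_congr rfl fun l _ => by rw [mul_comm]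
    _ = N * c (i % N) := sum_range_ite_dvd_sub hN _ i

theorem pulsone_natCast_add_mul {M N k k₀ : ℕ} (l₀ d : ℕ) (hk : k < M) :
    pulsone M N k₀ l₀ ((k + d * M : ℕ) : ℤ)
      = if k = k₀ then 1 / (Real.sqrt N : ℂ) * exp (2 * π * I * d * l₀ / N) else 0 := by
  have hM : (M : ℤ) ≠ 0 := by omega
  have hmod : ((k + d * M : ℕ) : ℤ) % M = k := by
    push_cast
    rw [Int.add_mul_emod_self_right, Int.emod_eq_of_lt (by omega) (by omega)]
  rw [pulsone, hmod]
  rcases eq_or_ne k k₀ with rfl | hne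
  · have hquot : ((k + d * M : ℕ) - k : ℤ) / M = d := by
      push_cast
      rw [add_sub_cancel_left, Int.mul_ediv_cancel _ hM]
    rw [if_pos rfl, if_pos rfl, hquot, Int.cast_natCast]
  · rw [if_neg (by exact_mod_cast hne), if_neg hne]

noncomputable def pulsoneSignal (M N : ℕ) (X : ℕ → ℕ → ℂ) (n : ℕ) : ℂ :=
  ∑ k₀ ∈ range M, ∑ l₀ ∈ range N, X k₀ l₀ * pulsone M N k₀ l₀ n

theorem pulsoneSignal_add_mul {M N k : ℕ} (X : ℕ → ℕ → ℂ) (d : ℕ) (hk : k < M) :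
    pulsoneSignal M N X (k + d * M)
      = ∑ l ∈ range N, X k l / Real.sqrt N * exp (2 * π * I * d * l / N) := by
  simp only [pulsoneSignal, pulsone_natCast_add_mul _ _ hk, mul_ite, mul_zero]
  rw [sum_comm, sum_congr rfl fun l _ => sum_ite_eq _ _ _]
  simp only [mem_range, hk, if_true]
  exact sum_congr rfl fun l _ => by ring

theorem sum_exp_neg_mul_pulsoneSignal_add_mul {M N k : ℕ} (X : ℕ → ℕ → ℂ) (hN : 0 < N)
    (hk : k < M) (i : ℕ) :
    ∑ d ∈ range N, exp (-(2 * π * I * i * ((k + d * M : ℕ) : ℂ) / (M * N)))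
        * pulsoneSignal M N X (k + d * M)
      = Real.sqrt N * (X k (i % N) * exp (-(2 * π * I * i * k / (M * N)))) := by
  have hM : (M : ℂ) ≠ 0 := by exact_mod_cast (show M ≠ 0 by omega)
  have hsq : (Real.sqrt N : ℂ) * Real.sqrt N = N := by
    exact_mod_cast Real.mul_self_sqrt (Nat.cast_nonneg N)
  have hphase : ∀ d : ℕ, exp (-(2 * π * I * i * ((k + d * M : ℕ) : ℂ) / (M * N)))
      = exp (-(2 * π * I * i * k / (M * N))) * exp (-(2 * π * I * i * d / N)) := fun d => by
    rw [← exp_add]; congr 1; push_cast; field_simp; ring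
  calc _ = exp (-(2 * π * I * i * k / (M * N))) * ∑ d ∈ range N, exp (-(2 * π * I * i * d / N))
        * ∑ l ∈ range N, X k l / Real.sqrt N * exp (2 * π * I * d * l / N) := by
        rw [mul_sum]
        refine sum_congr rfl fun d _ => ?_
        rw [hphase, pulsoneSignal_add_mul X d hk, mul_assoc]
    _ = exp (-(2 * π * I * i * k / (M * N))) * (N * (X k (i % N) / Real.sqrt N)) := by
        rw [sum_range_exp_neg_mul_sum_exp hN (fun l => X k l / Real.sqrt N) i]
    _ = _ := by rw [← hsq]; field_simp

theorem idfzt_of_pulsone_signal_general (M N : ℕ) (hN : 0 < N)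
    (X : ℕ → ℕ → ℂ)
    (x : ℕ → ℂ)
    (hx : ∀ n, x n = ∑ k₀ ∈ Finset.range M, ∑ l₀ ∈ Finset.range N,
        X k₀ l₀ * pulsone M N k₀ l₀ (n : ℤ))
    (s : ℕ → ℂ)
    (hs : ∀ i, s i = (1 / (Real.sqrt (M * N) : ℂ)) * ∑ n ∈ Finset.range (M * N),
        Complex.exp (-(2 * Real.pi * Complex.I * i * n / (M * N))) * x n)
    (i : ℕ) :
    s i = (1 / (Real.sqrt M : ℂ)) * ∑ k₀ ∈ Finset.range M,
        X k₀ (i % N) * Complex.exp (-(2 * Real.pi * Complex.I * i * k₀ / (M * N))) := by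
  obtain rfl : x = pulsoneSignal M N X := funext hx
  have hscale : 1 / (Real.sqrt (M * N) : ℂ) * Real.sqrt N = 1 / Real.sqrt M := by
    have hsqrt : (Real.sqrt N : ℂ) ≠ 0 := by
      exact_mod_cast (Real.sqrt_pos.mpr (by exact_mod_cast hN)).ne'
    rw [Real.sqrt_mul (Nat.cast_nonneg M), ofReal_mul, one_div_mul_eq_div,
      div_mul_cancel_right₀ hsqrt, one_div]
  rw [hs, sum_range_mul_eq_sum_sum_add_mul,
    sum_congr rfl fun k hk => sum_exp_neg_mul_pulsoneSignal_add_mul X hN (mem_range.mp hk) i,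
    ← mul_sum, ← mul_assoc, hscale]

theorem idfzt_of_pulsone_signal (M N : ℕ) (hM : 0 < M) (hN : 0 < N)
    (X : ℕ → ℕ → ℂ)
    (x : ℕ → ℂ)
    (hx : ∀ n, x n = ∑ k₀ ∈ Finset.range M, ∑ l₀ ∈ Finset.range N,
        X k₀ l₀ * pulsone M N k₀ l₀ (n : ℤ))
    (s : ℕ → ℂ)
    (hs : ∀ i, s i = (1 / (Real.sqrt (M * N) : ℂ)) * ∑ n ∈ Finset.range (M * N),
        Complex.exp (-(2 * Real.pi * Complex.I * i * n / (M * N))) * x n)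
    (i : ℕ) (hi : i ≤ M * N - 1) :
    s i = (1 / (Real.sqrt M : ℂ)) * ∑ k₀ ∈ Finset.range M,
        X k₀ (i % N) * Complex.exp (-(2 * Real.pi * Complex.I * i * k₀ / (M * N))) :=
  idfzt_of_pulsone_signal_general M N hN X x hx s hs i
end

section
/- An orthonormal basis {φ_i} of ℂ^{MN} (viewed as MN-periodic functions) yields equal diagonal entries of HᴴH (non-fading) whenever φ_i[n-k₂] conj(φ_i[n-k₁]) = φ_j[n-k₂] conj(φ_j[n-k₁]) for all i,j and all 0 ≤ k₁,k₂ ≤ M-1, provided the periodized channel h[k,l] is supported within 0 ≤ k ≤ M-1, 0 ≤ l ≤ N-1. Here H[f,i] = Σ_{k̄,l̄} e^{-2πi l̄k̄/(MN)} h[k̄,l̄] Σ_n conj(φ_f[n]) φ_i[n-k̄] e^{2πi l̄n/(MN)}. -/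
open Complex

lemma sum_conj_mul_collapse (MN : ℕ) (φ : ℕ → ℤ → ℂ)
    (horth : ∀ n₁ n₂ : ℕ, n₁ < MN → n₂ < MN →
      ∑ f ∈ Finset.range MN, φ f (n₁ : ℤ) * starRingEnd ℂ (φ f (n₂ : ℤ)) =
        if n₁ = n₂ then 1 else 0)
    (w : ℤ → ℂ) (H : ℕ → ℂ)
    (hw : ∀ f ∈ Finset.range MN,
      H f = ∑ n ∈ Finset.range MN, starRingEnd ℂ (φ f (n : ℤ)) * w (n : ℤ)) :
    ∑ f ∈ Finset.range MN, starRingEnd ℂ (H f) * H f =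
      ∑ n ∈ Finset.range MN, starRingEnd ℂ (w (n : ℤ)) * w (n : ℤ) := by
  have step1 : ∑ f ∈ Finset.range MN, starRingEnd ℂ (H f) * H f =
      ∑ f ∈ Finset.range MN, ∑ n₁ ∈ Finset.range MN, ∑ n₂ ∈ Finset.range MN,
        (starRingEnd ℂ (w (n₁ : ℤ)) * w (n₂ : ℤ)) *
          (φ f (n₁ : ℤ) * starRingEnd ℂ (φ f (n₂ : ℤ))) := by
    refine Finset.sum_congr rfl fun f hf => ?_
    rw [hw f hf, map_sum, Finset.sum_mul_sum]
    refine Finset.sum_congr rfl fun n₁ _ => Finset.sum_congr rfl fun n₂ _ => ?_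
    simp only [map_mul, Complex.conj_conj]
    ring
  rw [step1, Finset.sum_comm]
  refine Finset.sum_congr rfl fun n₁ hn₁ => ?_
  rw [Finset.sum_comm]
  have : ∀ n₂ ∈ Finset.range MN,
      ∑ f ∈ Finset.range MN, (starRingEnd ℂ (w (n₁ : ℤ)) * w (n₂ : ℤ)) *
        (φ f (n₁ : ℤ) * starRingEnd ℂ (φ f (n₂ : ℤ))) =
      (starRingEnd ℂ (w (n₁ : ℤ)) * w (n₂ : ℤ)) * (if n₁ = n₂ then 1 else 0) := by
    intro n₂ hn₂
    rw [← Finset.mul_sum, horth n₁ n₂ (Finset.mem_range.mp hn₁) (Finset.mem_range.mp hn₂)]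
  rw [Finset.sum_congr rfl this]
  simp only [mul_ite, mul_one, mul_zero, Finset.sum_ite_eq, hn₁, if_pos]

theorem non_fading_condition (M N : ℕ) (hM : 0 < M) (hN : 0 < N)
    (φ : ℕ → ℤ → ℂ)
    (hper : ∀ i, i < M * N → ∀ n : ℤ, φ i (n + (M * N : ℤ)) = φ i n)
    (horth : ∀ n₁ n₂ : ℕ, n₁ < M * N → n₂ < M * N →
      ∑ f ∈ Finset.range (M * N), φ f (n₁ : ℤ) * starRingEnd ℂ (φ f (n₂ : ℤ)) =
        if n₁ = n₂ then 1 else 0)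
    (hcond : ∀ i j : ℕ, i < M * N → j < M * N →
      ∀ k₁ k₂ : ℕ, k₁ ≤ M - 1 → k₂ ≤ M - 1 → ∀ n : ℤ,
        φ i (n - (k₂ : ℤ)) * starRingEnd ℂ (φ i (n - (k₁ : ℤ))) =
          φ j (n - (k₂ : ℤ)) * starRingEnd ℂ (φ j (n - (k₁ : ℤ))))
    (h : ℕ → ℕ → ℂ)
    (hsupp : ∀ k l : ℕ, k < M * N → l < M * N →
      ¬(k ≤ M - 1 ∧ l ≤ N - 1) → h k l = 0)
    (H : ℕ → ℕ → ℂ)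
    (hH : ∀ f i : ℕ, f < M * N → i < M * N →
      H f i = ∑ kbar ∈ Finset.range (M * N), ∑ lbar ∈ Finset.range (M * N),
        Complex.exp (-(2 * Real.pi * Complex.I * lbar * kbar / (M * N))) * h kbar lbar *
          ∑ n ∈ Finset.range (M * N),
            starRingEnd ℂ (φ f (n : ℤ)) * φ i ((n : ℤ) - (kbar : ℤ)) *
              Complex.exp (2 * Real.pi * Complex.I * lbar * n / (M * N))) :
    ∀ i j : ℕ, i < M * N → j < M * N →
      ∑ f ∈ Finset.range (M * N), starRingEnd ℂ (H f i) * H f i =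
        ∑ f ∈ Finset.range (M * N), starRingEnd ℂ (H f j) * H f j := by
  intro i j hi hj
  set R := Finset.range (M * N) with hR
  -- the "filtered" signal w p n
  set w : ℕ → ℤ → ℂ := fun p n =>
    ∑ kbar ∈ R, ∑ lbar ∈ R,
      Complex.exp (-(2 * Real.pi * Complex.I * lbar * kbar / (M * N))) * h kbar lbar *
        φ p (n - (kbar : ℤ)) *
        Complex.exp (2 * Real.pi * Complex.I * lbar * (n : ℂ) / (M * N)) with hwdef
  have hw : ∀ p, p < M * N → ∀ f ∈ R,
      H f p = ∑ n ∈ R, starRingEnd ℂ (φ f (n : ℤ)) * w p (n : ℤ) := by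
    intro p hp f hf
    rw [hH f p (Finset.mem_range.mp hf) hp]
    simp only [hwdef, Finset.mul_sum]
    refine Eq.trans (Finset.sum_congr rfl fun kbar _ => Finset.sum_comm)
      (Eq.trans Finset.sum_comm ?_)
    refine Finset.sum_congr rfl fun n _ => ?_
    refine Finset.sum_congr rfl fun kbar _ => ?_
    refine Finset.sum_congr rfl fun lbar _ => ?_
    push_cast
    ring
  rw [sum_conj_mul_collapse (M * N) φ horth (w i) (fun f => H f i) (hw i hi),
      sum_conj_mul_collapse (M * N) φ horth (w j) (fun f => H f j) (hw j hj)]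
  refine Finset.sum_congr rfl fun n hn => ?_
  simp only [hwdef]
  rw [map_sum, Finset.sum_mul_sum]
  conv_rhs => rw [map_sum, Finset.sum_mul_sum]
  refine Finset.sum_congr rfl fun k₁ hk₁ => Finset.sum_congr rfl fun k₂ hk₂ => ?_
  rw [map_sum, Finset.sum_mul_sum]
  conv_rhs => rw [map_sum, Finset.sum_mul_sum]
  refine Finset.sum_congr rfl fun l₁ hl₁ => Finset.sum_congr rfl fun l₂ hl₂ => ?_
  by_cases hz₁ : h k₁ l₁ = 0
  · simp [hz₁]
  by_cases hz₂ : h k₂ l₂ = 0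
  · simp [hz₂]
  have hc₁ : k₁ ≤ M - 1 ∧ l₁ ≤ N - 1 := by
    by_contra hc
    exact hz₁ (hsupp k₁ l₁ (Finset.mem_range.mp hk₁) (Finset.mem_range.mp hl₁) hc)
  have hc₂ : k₂ ≤ M - 1 ∧ l₂ ≤ N - 1 := by
    by_contra hc
    exact hz₂ (hsupp k₂ l₂ (Finset.mem_range.mp hk₂) (Finset.mem_range.mp hl₂) hc)
  have key := hcond i j hi hj k₁ k₂ hc₁.1 hc₂.1 (n : ℤ)
  simp only [map_mul]
  linear_combination (starRingEnd ℂ (Complex.exp (-(2 * Real.pi * Complex.I * l₁ * k₁ / (M * N)))) *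
    starRingEnd ℂ (h k₁ l₁) *
    starRingEnd ℂ (Complex.exp (2 * Real.pi * Complex.I * l₁ * (((n : ℤ) : ℂ)) / (M * N))) *
    Complex.exp (-(2 * Real.pi * Complex.I * l₂ * k₂ / (M * N))) * h k₂ l₂ *
    Complex.exp (2 * Real.pi * Complex.I * l₂ * (((n : ℤ) : ℂ)) / (M * N))) * key
end

section
/- For the pulsone basis and any 0 ≤ k₁,k₂ ≤ M-1, Σ_{n=0}^{MN-1} p_{(k₀,l₀)}[n-k₂] conj(p_{(k₀,l₀)}[n-k₁]) = δ[k₁-k₂], independent of (k₀,l₀). Hence the pulsone basis satisfies the non-fading condition. -/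
open Complex

/-!
The pulsone is supported on the residue class `k₀` mod `M`, where it has modulus `1 / √N`.
For `k₁ ≠ k₂` in `[0, M)` the shifted pulsones live on different residue classes, so every
term of the sum vanishes; for `k₁ = k₂` the sum counts the `N` points of one residue class
in `[0, MN)`, each contributing `1 / N`.
-/

open Finset ComplexConjugate

lemma Int.natCast_sub_emod_eq_iff_modEq {M k₀ : ℕ} (hk₀ : k₀ < M) (n k : ℕ) :
    ((n : ℤ) - k) % M = k₀ ↔ n ≡ k₀ + k [MOD M] := by
  have hk₀M : (k₀ : ℤ) % M = k₀ := Int.emod_eq_of_lt k₀.cast_nonneg (by exact_mod_cast hk₀)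
  rw [← Int.natCast_modEq_iff, ← hk₀M, ← Int.ModEq, Int.modEq_iff_dvd, Int.modEq_iff_dvd]
  push_cast
  ring_nf

lemma Nat.card_filter_range_mul_modEq {M : ℕ} (hM : 0 < M) (N v : ℕ) :
    #{n ∈ range (M * N) | n ≡ v [MOD M]} = N := by
  rw [← Nat.count_eq_card_filter_range, Nat.count_modEq_card _ hM]
  simp [Nat.mul_mod_right, hM]

section

variable {M N k₀ l₀ : ℕ}

lemma emod_eq_of_pulsone_ne_zero {n : ℤ} (h : pulsone M N k₀ l₀ n ≠ 0) : n % M = k₀ := by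
  by_contra hn
  exact h (if_neg hn)

lemma norm_pulsone_of_emod_eq {n : ℤ} (h : n % M = k₀) :
    ‖pulsone M N k₀ l₀ n‖ = (Real.sqrt N)⁻¹ := by
  rw [pulsone, if_pos h, norm_mul, norm_exp]
  simp

lemma pulsone_mul_conj_self (n : ℤ) :
    pulsone M N k₀ l₀ n * conj (pulsone M N k₀ l₀ n) = if n % M = k₀ then (N : ℂ)⁻¹ else 0 := by
  split_ifs with h
  · rw [mul_conj, normSq_eq_norm_sq, norm_pulsone_of_emod_eq h, inv_pow,
      Real.sq_sqrt N.cast_nonneg]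
    push_cast; rfl
  · rw [pulsone, if_neg h, zero_mul]

lemma pulsone_sub_mul_conj_pulsone_sub_eq_zero {k₁ k₂ : ℕ} (hk₁ : k₁ < M) (hk₂ : k₂ < M)
    (hk : k₁ ≠ k₂) (n : ℤ) :
    pulsone M N k₀ l₀ (n - k₂) * conj (pulsone M N k₀ l₀ (n - k₁)) = 0 := by
  by_contra h
  obtain ⟨h₂, h₁⟩ := mul_ne_zero_iff.mp h
  have hn : n - k₂ ≡ n - k₁ [ZMOD M] :=
    (emod_eq_of_pulsone_ne_zero h₂).trans
      (emod_eq_of_pulsone_ne_zero ((map_ne_zero _).mp h₁)).symm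
  have hk₂₁ : (k₂ : ℤ) ≡ k₁ [ZMOD M] := by simpa using hn.sub_left n
  exact hk (Int.natCast_modEq_iff.mp hk₂₁ |>.eq_of_lt_of_lt hk₂ hk₁).symm

end

theorem pulsone_non_fading_general (M N : ℕ) (hM : 0 < M) (hN : 0 < N)
    (k₀ l₀ : ℕ) (hk₀ : k₀ ≤ M - 1)
    (k₁ k₂ : ℕ) (hk₁ : k₁ ≤ M - 1) (hk₂ : k₂ ≤ M - 1) :
    ∑ n ∈ Finset.range (M * N),
        pulsone M N k₀ l₀ ((n : ℤ) - (k₂ : ℤ)) *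
          starRingEnd ℂ (pulsone M N k₀ l₀ ((n : ℤ) - (k₁ : ℤ))) =
      if k₁ = k₂ then 1 else 0 := by
  split_ifs with hk
  · subst hk
    simp_rw [pulsone_mul_conj_self, Int.natCast_sub_emod_eq_iff_modEq (by omega : k₀ < M),
      ← sum_filter, sum_const, Nat.card_filter_range_mul_modEq hM, nsmul_eq_mul]
    exact mul_inv_cancel₀ (Nat.cast_ne_zero.mpr hN.ne')
  · exact sum_eq_zero fun n _ =>
      pulsone_sub_mul_conj_pulsone_sub_eq_zero (by omega) (by omega) hk n

theorem pulsone_non_fading (M N : ℕ) (hM : 0 < M) (hN : 0 < N)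
    (k₀ l₀ : ℕ) (hk₀ : k₀ ≤ M - 1) (hl₀ : l₀ ≤ N - 1)
    (k₁ k₂ : ℕ) (hk₁ : k₁ ≤ M - 1) (hk₂ : k₂ ≤ M - 1) :
    ∑ n ∈ Finset.range (M * N),
        pulsone M N k₀ l₀ ((n : ℤ) - (k₂ : ℤ)) *
          starRingEnd ℂ (pulsone M N k₀ l₀ ((n : ℤ) - (k₁ : ℤ))) =
      if k₁ = k₂ then 1 else 0 :=
  pulsone_non_fading_general M N hM hN k₀ l₀ hk₀ k₁ k₂ hk₁ hk₂
end
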